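/- Let N, p be positive integers with p ≤ N, let Ψ be a real N×p matrix of full column rank, let R be a real symmetric positive definite N×N matrix, and let y ∈ ℝ^N. Define the weighted least squares estimate π̂_WLS = (ΨᵀR⁻¹Ψ)⁻¹ΨᵀR⁻¹y, and for g > 0 define L_SPK(g) = log det(g·ΨΨᵀ + R) + yᵀ(g·ΨΨᵀ + R)⁻¹y and L̂_SP = log det(R) + (y − Ψπ̂_WLS)ᵀR⁻¹(y − Ψπ̂_WLS). Then lim_{g→∞} [ L_SPK(g) − L̂_SP − p·log g ] = log det(ΨᵀR⁻¹Ψ). -/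

import Mathlib

/-!
Let `M = ΨᵀR⁻¹Ψ`, positive definite because `Ψ` is injective. For `g > 0` the matrix
determinant lemma and the Woodbury identity give
`det (gΨΨᵀ + R) = det R · gᵖ · det (g⁻¹I + M)` and
`(gΨΨᵀ + R)⁻¹ = R⁻¹ - R⁻¹Ψ (g⁻¹I + M)⁻¹ ΨᵀR⁻¹`,
while the weighted residual of the least squares fit is `yᵀ (R⁻¹ - R⁻¹Ψ M⁻¹ ΨᵀR⁻¹) y`.
Hence `L_SPK(g) - L̂_SP - p log g` is a function of `g⁻¹` that is continuous at `0`,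
where it equals `log det M`.
-/

open Matrix Filter Topology

namespace Matrix

variable {m n K : Type*}

theorem mulVec_injective_of_rank_eq_card [Fintype n] [Field K] {A : Matrix m n K}
    (h : A.rank = Fintype.card n) : Function.Injective A.mulVec :=
  mulVec_injective_iff.2 <| linearIndependent_iff_card_eq_finrank_span.2 <| by
    rw [← h]; exact rank_eq_finrank_span_cols A

theorem PosDef.transpose_mul_mul_of_rank_eq_card [Fintype m] [Fintype n] {A : Matrix m m ℝ}
    (hA : A.PosDef) {B : Matrix m n ℝ} (hB : B.rank = Fintype.card n) :
    (Bᵀ * A * B).PosDef := by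
  simpa using hA.conjTranspose_mul_mul_same (mulVec_injective_of_rank_eq_card hB)

section Field

variable [Fintype m] [Fintype n] [DecidableEq m] [DecidableEq n] [Field K] {R : Matrix m m K}
  {g : K}

theorem det_smul_mul_add (U : Matrix m n K) (V : Matrix n m K) (hR : IsUnit R.det)
    (hg : g ≠ 0) :
    (g • (U * V) + R).det =
      R.det * (g ^ Fintype.card n * (g⁻¹ • 1 + V * R⁻¹ * U).det) := by
  have hscale : 1 + V * R⁻¹ * (g • U) = g • (g⁻¹ • 1 + V * R⁻¹ * U) := by
    rw [Matrix.mul_smul, smul_add, smul_smul, mul_inv_cancel₀ hg, one_smul]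
  rw [add_comm, ← Matrix.smul_mul, det_add_mul _ _ hR, hscale, det_smul]

theorem inv_smul_mul_add (U : Matrix m n K) (V : Matrix n m K) (hR : IsUnit R)
    (hg : g ≠ 0) (hS : IsUnit (g⁻¹ • 1 + V * R⁻¹ * U)) :
    (g • (U * V) + R)⁻¹ = R⁻¹ - R⁻¹ * U * (g⁻¹ • 1 + V * R⁻¹ * U)⁻¹ * V * R⁻¹ := by
  have hleft : g⁻¹ • (1 : Matrix n n K) * g • 1 = 1 := by simp [smul_smul, hg]
  have hinv : (g • (1 : Matrix n n K))⁻¹ = g⁻¹ • 1 := inv_eq_left_inv hleft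
  rw [← hinv] at hS ⊢
  have hWoodbury := add_mul_mul_inv_eq_sub R U _ V hR (.of_mul_eq_one_right _ hleft) hS
  rwa [Matrix.mul_smul, Matrix.mul_one, Matrix.smul_mul, add_comm] at hWoodbury

end Field

theorem weightedLeastSquares_residual_dotProduct [Fintype m] [Fintype n] [DecidableEq m]
    [DecidableEq n] [CommRing K] {W : Matrix m m K}
    (hW : Wᵀ = W) (Ψ : Matrix m n K) (hM : IsUnit (Ψᵀ * W * Ψ).det) (y : m → K) :
    (y - Ψ *ᵥ (((Ψᵀ * W * Ψ)⁻¹ * (Ψᵀ * W)) *ᵥ y)) ⬝ᵥ W *ᵥ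
        (y - Ψ *ᵥ (((Ψᵀ * W * Ψ)⁻¹ * (Ψᵀ * W)) *ᵥ y)) =
      y ⬝ᵥ (W - W * Ψ * (Ψᵀ * W * Ψ)⁻¹ * Ψᵀ * W) *ᵥ y := by
  set M := Ψᵀ * W * Ψ with hMdef
  set P := Ψ * (M⁻¹ * (Ψᵀ * W))
  set Q := W * Ψ * M⁻¹ * Ψᵀ * W
  have hMinvT : M⁻¹ᵀ = M⁻¹ := by
    rw [transpose_nonsing_inv, hMdef, transpose_mul, transpose_mul, hW, transpose_transpose,
      Matrix.mul_assoc]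
  have hcancel (X : Matrix n m K) : M⁻¹ * (Ψᵀ * (W * (Ψ * X))) = X := by
    rw [show Ψᵀ * (W * (Ψ * X)) = M * X by simp only [hMdef, Matrix.mul_assoc],
      ← Matrix.mul_assoc, nonsing_inv_mul _ hM, Matrix.one_mul]
  have hWP : W * P = Q := by simp only [P, Q, Matrix.mul_assoc]
  have hPTW : Pᵀ * W = Q := by
    simp only [P, Q, transpose_mul, hW, hMinvT, transpose_transpose, Matrix.mul_assoc]
  have hPTQ : Pᵀ * Q = Q := by
    simp only [P, Q, transpose_mul, hW, hMinvT, transpose_transpose, Matrix.mul_assoc, hcancel]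
  have hform : (1 - P)ᵀ * W * (1 - P) = W - Q := by
    rw [transpose_sub, transpose_one]
    calc (1 - Pᵀ) * W * (1 - P) = W - Pᵀ * W - W * P + Pᵀ * (W * P) := by noncomm_ring
      _ = W - Q := by rw [hWP, hPTW, hPTQ]; abel
  have hres : y - Ψ *ᵥ ((M⁻¹ * (Ψᵀ * W)) *ᵥ y) = (1 - P) *ᵥ y := by
    rw [mulVec_mulVec, sub_mulVec, one_mulVec]
  rw [hres, ← hform, ← mulVec_mulVec, dotProduct_mulVec, dotProduct_mulVec y, ← vecMul_vecMul,
    vecMul_transpose]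

theorem tendsto_inv_smul_one_add_atTop [DecidableEq n] (M : Matrix n n ℝ) :
    Tendsto (fun g : ℝ => g⁻¹ • (1 : Matrix n n ℝ) + M) atTop (𝓝 M) := by
  simpa using ((tendsto_inv_atTop_zero (𝕜 := ℝ)).smul_const (1 : Matrix n n ℝ)).add_const M

theorem tendsto_inv_smul_one_add_inv_atTop [Fintype n] [DecidableEq n] {M : Matrix n n ℝ}
    (hM : M.det ≠ 0) :
    Tendsto (fun g : ℝ => (g⁻¹ • (1 : Matrix n n ℝ) + M)⁻¹) atTop (𝓝 M⁻¹) :=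
  have hinv : ContinuousAt Inv.inv M := continuousAt_matrix_inv M <| by
    rw [Ring.inverse_eq_inv']; exact continuousAt_inv₀ hM
  hinv.tendsto.comp (tendsto_inv_smul_one_add_atTop M)

end Matrix

theorem spk_sp_loglik_difference_general
    (N p : ℕ)
    (Ψ : Matrix (Fin N) (Fin p) ℝ) (hΨ : Ψ.rank = p)
    (R : Matrix (Fin N) (Fin N) ℝ) (hR : R.PosDef)
    (y : Fin N → ℝ)
    (πWLS : Fin p → ℝ)
    (hπ : πWLS = ((Ψᵀ * R⁻¹ * Ψ)⁻¹ * (Ψᵀ * R⁻¹)).mulVec y)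
    (LSPK : ℝ → ℝ)
    (hLSPK : ∀ g : ℝ, LSPK g =
      Real.log ((g • (Ψ * Ψᵀ) + R).det)
        + y ⬝ᵥ ((g • (Ψ * Ψᵀ) + R)⁻¹).mulVec y)
    (LSP : ℝ)
    (hLSP : LSP = Real.log R.det
        + (y - Ψ.mulVec πWLS) ⬝ᵥ (R⁻¹).mulVec (y - Ψ.mulVec πWLS)) :
    Tendsto (fun g : ℝ => LSPK g - LSP - p * Real.log g) atTop
      (𝓝 (Real.log ((Ψᵀ * R⁻¹ * Ψ).det))) := by
  set M := Ψᵀ * R⁻¹ * Ψ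
  have hM : M.PosDef :=
    hR.inv.transpose_mul_mul_of_rank_eq_card (hΨ.trans (Fintype.card_fin p).symm)
  have hshift {g : ℝ} (hg : 0 < g) : (g⁻¹ • 1 + M).PosDef :=
    .posSemidef_add (PosSemidef.one.smul (inv_nonneg.2 hg.le)) hM
  have hlogdet : Tendsto (fun g : ℝ => Real.log (g⁻¹ • 1 + M).det) atTop
      (𝓝 (Real.log M.det)) :=
    (Real.continuousAt_log hM.det_pos.ne').tendsto.comp
      ((continuous_id.matrix_det.tendsto M).comp (tendsto_inv_smul_one_add_atTop M))
  have hquad : Tendsto (fun g : ℝ => y ⬝ᵥ (R⁻¹ - R⁻¹ * Ψ * (g⁻¹ • 1 + M)⁻¹ * Ψᵀ * R⁻¹) *ᵥ y)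
      atTop (𝓝 (LSP - Real.log R.det)) := by
    have hF : Continuous fun A : Matrix (Fin p) (Fin p) ℝ =>
        y ⬝ᵥ (R⁻¹ - R⁻¹ * Ψ * A * Ψᵀ * R⁻¹) *ᵥ y := by fun_prop
    have hRinvT : R⁻¹ᵀ = R⁻¹ := by simpa using hR.inv.isHermitian.eq
    rw [hLSP, hπ, weightedLeastSquares_residual_dotProduct hRinvT Ψ hM.det_pos.ne'.isUnit,
      add_sub_cancel_left]
    exact (hF.tendsto _).comp (tendsto_inv_smul_one_add_inv_atTop hM.det_pos.ne')
  have hlim := (hlogdet.add hquad).sub_const (LSP - Real.log R.det)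
  rw [add_sub_cancel_right] at hlim
  refine hlim.congr' ?_
  filter_upwards [eventually_gt_atTop 0] with g hg
  have hgp : g ^ p ≠ 0 := pow_ne_zero p hg.ne'
  have hSdet : (g⁻¹ • 1 + M).det ≠ 0 := (hshift hg).det_pos.ne'
  rw [hLSPK, det_smul_mul_add _ _ hR.det_pos.ne'.isUnit hg.ne',
    inv_smul_mul_add _ _ hR.isUnit hg.ne' (hshift hg).isUnit, Fintype.card_fin,
    Real.log_mul hR.det_pos.ne' (mul_ne_zero hgp hSdet), Real.log_mul hgp hSdet, Real.log_pow]
  ring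

/-- Proposition 1(ii): the difference between the SPK negative marginal log-likelihood
and the profile SP negative marginal log-likelihood, minus `p·log g`, tends to
`log det (ΨᵀR⁻¹Ψ)` as the prior variance `g = γ²` tends to infinity. -/
theorem spk_sp_loglik_difference
    (N p : ℕ) (hN : 0 < N) (hp : 0 < p) (hpN : p ≤ N)
    (Ψ : Matrix (Fin N) (Fin p) ℝ) (hΨ : Ψ.rank = p)
    (R : Matrix (Fin N) (Fin N) ℝ) (hR : R.PosDef)
    (y : Fin N → ℝ)
    (πWLS : Fin p → ℝ)
    (hπ : πWLS = ((Ψᵀ * R⁻¹ * Ψ)⁻¹ * (Ψᵀ * R⁻¹)).mulVec y)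
    (LSPK : ℝ → ℝ)
    (hLSPK : ∀ g : ℝ, LSPK g =
      Real.log ((g • (Ψ * Ψᵀ) + R).det)
        + y ⬝ᵥ ((g • (Ψ * Ψᵀ) + R)⁻¹).mulVec y)
    (LSP : ℝ)
    (hLSP : LSP = Real.log R.det
        + (y - Ψ.mulVec πWLS) ⬝ᵥ (R⁻¹).mulVec (y - Ψ.mulVec πWLS)) :
    Tendsto (fun g : ℝ => LSPK g - LSP - p * Real.log g) atTop
      (𝓝 (Real.log ((Ψᵀ * R⁻¹ * Ψ).det))) :=
  spk_sp_loglik_difference_general N p Ψ hΨ R hR y πWLS hπ LSPK hLSPK LSP hLSP
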